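/- Let c₁ > 0, 0 < ρ < (9/10)·c₁, Γ > 0 and a, b ≥ 0. Let ω : ℂ → ℂ be a continuous function such that: (i) for every point ζ ∈ ℂ with Re ζ > Γ one has Re ω(ζ) ≥ (9/10)·c₁ and |Im ω(ζ)| ≤ ρ; (ii) ∫₀^Γ |Re ω(λ)| dλ ≤ a·Γ and ∫₀^Γ |Im ω(λ)| dλ ≤ b·Γ (integrals along the real axis). For τ ∈ ℂ with Re τ > Γ define W(τ) = ∫₀^{Re τ} ω(λ) dλ + i·∫₀^{Im τ} ω(Re τ + i·μ) dμ (integral along the path going first along the real axis from 0 to Re τ, then vertically from Re τ to τ). Then for every τ ∈ ℂ satisfying Re τ ≥ max{Γ, 2·((9/10)·c₁ − ρ)⁻¹·((9/10)·c₁ + ρ + a + b)·Γ}, one has |W(τ)| ≥ ((9/10)·c₁ − ρ)·|τ|/2. -/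

import Mathlib

open Complex intervalIntegral

/-!
Write `τ = T + i s` and pair the path integral `W` with `conj τ`. Beyond `Re ζ = Γ` the values of
`ω` lie in the sector `Re ≥ c, |Im| ≤ ρ` (`c = 9c₁/10`), so the horizontal piece from `Γ` to `T`
contributes at least `c(T - Γ)T - ρ(T - Γ)|s|` to `Re (W conj τ)` and the vertical piece at least
`c s² - ρ|s|T`, while the initial piece over `[0, Γ]` costs at most `(a + b)Γ|τ|`. With
`2T|s| ≤ |τ|²` this gives `Re (W conj τ) ≥ (c - ρ)|τ|² - (c + a + b)Γ|τ|`, hence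
`|W| ≥ (c - ρ)|τ| - (c + a + b)Γ`, which is at least `(c - ρ)|τ|/2` by the choice of `Re τ`.
-/

open MeasureTheory
open scoped Interval ComplexConjugate

section IntervalIntegral

variable {f : ℝ → ℂ} {p q c ρ : ℝ}

theorem abs_im_intervalIntegral_le (hf : IntervalIntegrable f volume p q)
    (h : ∀ x ∈ Ι p q, |(f x).im| ≤ ρ) : |(∫ x in p..q, f x).im| ≤ ρ * |q - p| := by
  have := norm_integral_le_of_norm_le_const (f := fun x => (f x).im) h
  rwa [← RCLike.im_to_complex, ← intervalIntegral_im hf]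

theorem mul_sub_le_re_intervalIntegral (hf : IntervalIntegrable f volume p q) (hpq : p ≤ q)
    (h : ∀ x ∈ Ι p q, c ≤ (f x).re) : c * (q - p) ≤ (∫ x in p..q, f x).re := by
  rw [← RCLike.re_to_complex, ← intervalIntegral_re hf]
  have := integral_mono_on_of_le_Ioo hpq intervalIntegrable_const ⟨hf.1.re, hf.2.re⟩
    fun x hx => h x (by rw [Set.uIoc_of_le hpq]; exact Set.Ioo_subset_Ioc_self hx)
  simpa [mul_comm] using this

theorem mul_sq_le_re_intervalIntegral_mul (hf : IntervalIntegrable f volume p q)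
    (h : ∀ x ∈ Ι p q, c ≤ (f x).re) : c * (q - p) ^ 2 ≤ (∫ x in p..q, f x).re * (q - p) := by
  rcases le_total p q with hpq | hqp
  · have := mul_sub_le_re_intervalIntegral hf hpq h
    nlinarith [sub_nonneg.2 hpq]
  · have := mul_sub_le_re_intervalIntegral hf.symm hqp (by rwa [Set.uIoc_comm])
    rw [integral_symm, neg_re]
    nlinarith [sub_nonneg.2 hqp]

theorem norm_intervalIntegral_le_abs_re_add_abs_im
    (hf : IntervalIntegrable f volume p q) (hpq : p ≤ q) :
    ‖∫ x in p..q, f x‖ ≤ (∫ x in p..q, |(f x).re|) + ∫ x in p..q, |(f x).im| := by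
  refine (norm_le_abs_re_add_abs_im _).trans (add_le_add ?_ ?_)
  · rw [← RCLike.re_to_complex, ← intervalIntegral_re hf]
    exact abs_integral_le_integral_abs hpq
  · rw [← RCLike.im_to_complex, ← intervalIntegral_im hf]
    exact abs_integral_le_integral_abs hpq

end IntervalIntegral

theorem sub_le_norm_of_le_re_mul_conj {w τ : ℂ} {A B : ℝ} (hτ : τ ≠ 0)
    (h : A * ‖τ‖ ^ 2 - B * ‖τ‖ ≤ (w * conj τ).re) : A * ‖τ‖ - B ≤ ‖w‖ := by
  have hle : (w * conj τ).re ≤ ‖w‖ * ‖τ‖ := by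
    simpa using re_le_norm (w * conj τ)
  exact le_of_mul_le_mul_right (by linarith) (norm_pos_iff.2 hτ)

noncomputable def lPathIntegral (ω : ℂ → ℂ) (x₀ : ℝ) (τ : ℂ) : ℂ :=
  (∫ l in x₀..τ.re, ω l) + I * ∫ m in (0:ℝ)..τ.im, ω (τ.re + m * I)

section LPath

variable {ω : ℂ → ℂ}

theorem lPathIntegral_eq_add (hω : Continuous ω) (x₀ x₁ : ℝ) (τ : ℂ) :
    lPathIntegral ω x₀ τ = (∫ l in x₀..x₁, ω l) + lPathIntegral ω x₁ τ := by
  have hint (p q : ℝ) : IntervalIntegrable (fun l : ℝ => ω l) volume p q :=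
    (hω.comp continuous_ofReal).intervalIntegrable p q
  rw [lPathIntegral, lPathIntegral, ← integral_add_adjacent_intervals (hint x₀ x₁) (hint x₁ τ.re),
    add_assoc]

theorem le_re_lPathIntegral_mul_conj {c ρ x₀ : ℝ} {τ : ℂ} (hω : Continuous ω) (hρ : 0 ≤ ρ)
    (hx₀ : 0 ≤ x₀) (hτ : x₀ < τ.re)
    (hsector : ∀ ζ : ℂ, x₀ < ζ.re → c ≤ (ω ζ).re ∧ |(ω ζ).im| ≤ ρ) :
    (c - ρ) * ‖τ‖ ^ 2 - c * x₀ * τ.re ≤ (lPathIntegral ω x₀ τ * conj τ).re := by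
  set T := τ.re with hT
  set s := τ.im with hs
  set H := ∫ l in x₀..T, ω l
  set V := ∫ m in (0:ℝ)..s, ω (T + m * I)
  have hH : IntervalIntegrable (fun l : ℝ => ω l) volume x₀ T :=
    (hω.comp continuous_ofReal).intervalIntegrable _ _
  have hV : IntervalIntegrable (fun m : ℝ => ω (T + m * I)) volume 0 s :=
    (hω.comp (by fun_prop)).intervalIntegrable _ _
  have hsectorH (l : ℝ) (hl : l ∈ Ι x₀ T) :=
    hsector l (by simpa using (Set.uIoc_of_le hτ.le ▸ hl).1)
  have hsectorV (m : ℝ) := hsector (T + m * I) (by simpa using hτ)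
  have hHre : c * (T - x₀) ≤ H.re :=
    mul_sub_le_re_intervalIntegral hH hτ.le fun l hl => (hsectorH l hl).1
  have hHim : |H.im| ≤ ρ * (T - x₀) := by
    simpa [abs_of_pos (sub_pos.2 hτ)] using
      abs_im_intervalIntegral_le hH fun l hl => (hsectorH l hl).2
  have hVre : c * s ^ 2 ≤ V.re * s := by
    simpa using mul_sq_le_re_intervalIntegral_mul hV fun m _ => (hsectorV m).1
  have hVim : |V.im| ≤ ρ * |s| := by
    simpa using abs_im_intervalIntegral_le hV fun m _ => (hsectorV m).2
  have hexpand :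
      (lPathIntegral ω x₀ τ * conj τ).re = H.re * T + H.im * s - V.im * T + V.re * s := by
    change ((H + I * V) * conj τ).re = _
    simp only [mul_re, add_re, add_im, mul_im, conj_re, conj_im, I_re, I_im, ← hT, ← hs]
    ring
  have hnorm : ‖τ‖ ^ 2 = T ^ 2 + s ^ 2 := by
    rw [Complex.sq_norm, normSq_apply]; ring
  have hT0 : 0 ≤ T := hx₀.trans hτ.le
  have hHreT : c * (T - x₀) * T ≤ H.re * T := mul_le_mul_of_nonneg_right hHre hT0
  have hHims : -(ρ * (T - x₀) * |s|) ≤ H.im * s := by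
    have := abs_mul H.im s ▸ mul_le_mul_of_nonneg_right hHim (abs_nonneg s)
    linarith [neg_abs_le (H.im * s)]
  have hVimT : V.im * T ≤ ρ * |s| * T :=
    mul_le_mul_of_nonneg_right ((le_abs_self _).trans hVim) hT0
  have hTs : 2 * T * |s| ≤ T ^ 2 + s ^ 2 := by
    nlinarith [sq_nonneg (T - |s|), sq_abs s]
  rw [hexpand, hnorm]
  linarith [mul_nonneg (mul_nonneg hρ hx₀) (abs_nonneg s), mul_le_mul_of_nonneg_left hTs hρ]

end LPath

theorem stmt_1_general (c₁ ρ Γ a b : ℝ) (hρ₀ : 0 < ρ) (hρ : ρ < (9 / 10) * c₁)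
    (hΓ : 0 < Γ) (ha : 0 ≤ a) (hb : 0 ≤ b)
    (ω : ℂ → ℂ) (hω : Continuous ω)
    (hre : ∀ ζ : ℂ, ζ.re > Γ → (9 / 10) * c₁ ≤ (ω ζ).re ∧ |(ω ζ).im| ≤ ρ)
    (hinta : ∫ l in (0:ℝ)..Γ, |(ω (l : ℂ)).re| ≤ a * Γ)
    (hintb : ∫ l in (0:ℝ)..Γ, |(ω (l : ℂ)).im| ≤ b * Γ) :
    ∀ τ : ℂ,
      max Γ (2 * ((9 / 10) * c₁ - ρ)⁻¹ * ((9 / 10) * c₁ + ρ + a + b) * Γ) ≤ τ.re →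
      ((9 / 10) * c₁ - ρ) * ‖τ‖ / 2 ≤
        ‖(∫ l in (0:ℝ)..τ.re, ω (l : ℂ)) +
          Complex.I * ∫ m in (0:ℝ)..τ.im, ω ((τ.re : ℂ) + (m : ℂ) * Complex.I)‖ := by
  intro τ hτ
  change _ ≤ ‖lPathIntegral ω 0 τ‖
  set c := (9 / 10) * c₁
  have hκ : 0 < c - ρ := sub_pos.2 hρ
  have hM : (c + ρ + a + b) * Γ ≤ (c - ρ) * τ.re / 2 :=
    calc (c + ρ + a + b) * Γ = (c - ρ) * (2 * (c - ρ)⁻¹ * (c + ρ + a + b) * Γ) / 2 := by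
          field_simp
      _ ≤ (c - ρ) * τ.re / 2 := by gcongr; exact (le_max_right _ _).trans hτ
  have hΓτ : Γ < τ.re := by
    refine lt_of_mul_lt_mul_left ?_ hκ.le
    linarith [mul_pos hΓ (by linarith : 0 < c + 3 * ρ + 2 * a + 2 * b)]
  have hτ0 : τ ≠ 0 := fun h => by simp [h] at hΓτ; linarith
  have hinit : ‖∫ l in (0:ℝ)..Γ, ω l‖ ≤ (a + b) * Γ := by
    have := norm_intervalIntegral_le_abs_re_add_abs_im (f := fun l : ℝ => ω l)
      ((hω.comp continuous_ofReal).intervalIntegrable 0 Γ) hΓ.le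
    linarith
  have hpath := le_re_lPathIntegral_mul_conj hω hρ₀.le hΓ.le hΓτ hre
  have hW : (c - ρ) * ‖τ‖ - (c + a + b) * Γ ≤ ‖lPathIntegral ω 0 τ‖ := by
    refine sub_le_norm_of_le_re_mul_conj hτ0 ?_
    rw [lPathIntegral_eq_add hω 0 Γ, add_mul _ (lPathIntegral ω Γ τ), add_re]
    have hinit_pair : -((a + b) * Γ * ‖τ‖) ≤ ((∫ l in (0:ℝ)..Γ, ω l) * conj τ).re := by
      have h := neg_le_of_abs_le (abs_re_le_norm ((∫ l in (0:ℝ)..Γ, ω l) * conj τ))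
      rw [norm_mul, norm_conj] at h
      linarith [mul_le_mul_of_nonneg_right hinit (norm_nonneg τ)]
    have hre_le : c * Γ * τ.re ≤ c * Γ * ‖τ‖ :=
      mul_le_mul_of_nonneg_left (re_le_norm τ) (mul_nonneg (hρ₀.trans hρ).le hΓ.le)
    linarith
  linarith [mul_le_mul_of_nonneg_left (re_le_norm τ) hκ.le, mul_pos hρ₀ hΓ]

/-- Key integral estimate in Lemma 3: along the L-shaped path (real segment `[0, Re τ]`
followed by the vertical segment from `Re τ` to `τ`), the integral of a frequency `ω`
whose real part is bounded below by `(9/10)c₁` and whose imaginary part is at most `ρ`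
for `Re ζ > Γ` grows at least linearly in `|τ|` once `Re τ` is large enough. -/
theorem stmt_1 (c₁ ρ Γ a b : ℝ) (hc₁ : 0 < c₁) (hρ₀ : 0 < ρ) (hρ : ρ < (9 / 10) * c₁)
    (hΓ : 0 < Γ) (ha : 0 ≤ a) (hb : 0 ≤ b)
    (ω : ℂ → ℂ) (hω : Continuous ω)
    (hre : ∀ ζ : ℂ, ζ.re > Γ → (9 / 10) * c₁ ≤ (ω ζ).re ∧ |(ω ζ).im| ≤ ρ)
    (hinta : ∫ l in (0:ℝ)..Γ, |(ω (l : ℂ)).re| ≤ a * Γ)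
    (hintb : ∫ l in (0:ℝ)..Γ, |(ω (l : ℂ)).im| ≤ b * Γ) :
    ∀ τ : ℂ,
      max Γ (2 * ((9 / 10) * c₁ - ρ)⁻¹ * ((9 / 10) * c₁ + ρ + a + b) * Γ) ≤ τ.re →
      ((9 / 10) * c₁ - ρ) * ‖τ‖ / 2 ≤
        ‖(∫ l in (0:ℝ)..τ.re, ω (l : ℂ)) +
          Complex.I * ∫ m in (0:ℝ)..τ.im, ω ((τ.re : ℂ) + (m : ℂ) * Complex.I)‖ :=
  stmt_1_general c₁ ρ Γ a b hρ₀ hρ hΓ ha hb ω hω hre hinta hintb
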